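/- arXiv:1905.01148 — 2 statements merged into one kernel-verified Lean document; each statement's English description precedes it below -/
import Mathlib

section
/- Let 𝒜 be an abelian length category, 𝒰 a torsion class, S ∈ 𝒰^⊥ a brick, and 𝒯 := T(𝒰 ∪ {S}) the smallest torsion class containing 𝒰 and S. Then every morphism f : X → S with X ∈ 𝒯 is zero or an epimorphism, and ker f ∈ 𝒯. Consequently S is a simple object of the left wide subcategory W_L(𝒯). -/
open CategoryTheory CategoryTheory.Limits

universe v u

attribute [local instance] CategoryTheory.Abelian.hasFiniteBiproducts

variable (C : Type u) [Category.{v} C] [Abelian C]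

/-- The right Hom-perpendicular category of a class of objects. -/
def RPerp (X : Set C) : Set C := {Y | ∀ A ∈ X, ∀ f : A ⟶ Y, f = 0}

/-- The left Hom-perpendicular category of a class of objects. -/
def LPerp (X : Set C) : Set C := {Y | ∀ A ∈ X, ∀ f : Y ⟶ A, f = 0}

/-- A torsion class: a class of objects containing the zero objects and closed under
quotients and extensions. -/
structure IsTorsionClass (T : Set C) : Prop where
  zero_mem : ∀ Z : C, IsZero Z → Z ∈ T
  quot_mem : ∀ ⦃A B : C⦄ (f : A ⟶ B), Epi f → A ∈ T → B ∈ T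
  ext_mem : ∀ E : ShortComplex C, E.ShortExact → E.X₁ ∈ T → E.X₃ ∈ T → E.X₂ ∈ T

/-- A torsion-free class: a class of objects containing the zero objects and closed under
subobjects and extensions. -/
structure IsTorsionFreeClass (F : Set C) : Prop where
  zero_mem : ∀ Z : C, IsZero Z → Z ∈ F
  sub_mem : ∀ ⦃A B : C⦄ (f : A ⟶ B), Mono f → B ∈ F → A ∈ F
  ext_mem : ∀ E : ShortComplex C, E.ShortExact → E.X₁ ∈ F → E.X₃ ∈ F → E.X₂ ∈ F

/-- The smallest torsion class containing a class of objects. -/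
def torsClosure (X : Set C) : Set C := ⋂₀ {T | IsTorsionClass C T ∧ X ⊆ T}

/-- The smallest torsion-free class containing a class of objects. -/
def torfClosure (X : Set C) : Set C := ⋂₀ {F | IsTorsionFreeClass C F ∧ X ⊆ F}

/-- `ExtStar U W` is the class of objects `X` admitting a short exact sequence
`0 → U' → X → W' → 0` with `U' ∈ U` and `W' ∈ W`. -/
def ExtStar (U W : Set C) : Set C :=
  {X | ∃ E : ShortComplex C, E.ShortExact ∧ E.X₁ ∈ U ∧ E.X₃ ∈ W ∧ Nonempty (E.X₂ ≅ X)}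

/-- The additive closure of a class of objects: direct summands of finite direct sums. -/
def AddClosure (S : Set C) : Set C :=
  {X | ∃ (n : ℕ) (c : Fin n → C), (∀ i, c i ∈ S) ∧ ∃ f : (⨁ c) ⟶ X, IsSplitEpi f}

/-- Membership in the filtration closure `Filt S`: objects admitting a finite filtration
with subquotients in `AddClosure S`. -/
inductive FiltMem (S : Set C) : C → Prop
  | of_isZero (X : C) : IsZero X → FiltMem S X
  | ext (E : ShortComplex C) : E.ShortExact → FiltMem S E.X₁ →
      E.X₃ ∈ AddClosure C S → FiltMem S E.X₂
  | of_iso (X Y : C) (e : X ≅ Y) : FiltMem S X → FiltMem S Y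

/-- The filtration closure of a class of objects. -/
def Filt (S : Set C) : Set C := {X | FiltMem C S X}

/-- The class of quotients of objects of the additive closure of `S`. -/
def Fac (S : Set C) : Set C := {X | ∃ A ∈ AddClosure C S, ∃ f : A ⟶ X, Epi f}

/-- The class of subobjects of objects of the additive closure of `S`. -/
def Subm (S : Set C) : Set C := {X | ∃ A ∈ AddClosure C S, ∃ f : X ⟶ A, Mono f}

/-- A wide subcategory: closed under kernels, cokernels and extensions
(and containing the zero objects). -/
structure IsWide (W : Set C) : Prop where
  zero_mem : ∀ Z : C, IsZero Z → Z ∈ W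
  ker_mem : ∀ ⦃X Y : C⦄ (f : X ⟶ Y), X ∈ W → Y ∈ W → kernel f ∈ W
  coker_mem : ∀ ⦃X Y : C⦄ (f : X ⟶ Y), X ∈ W → Y ∈ W → cokernel f ∈ W
  ext_mem : ∀ E : ShortComplex C, E.ShortExact → E.X₁ ∈ W → E.X₃ ∈ W → E.X₂ ∈ W

/-- A brick: a nonzero object all of whose nonzero endomorphisms are invertible
(equivalently, the endomorphism ring is a division ring). -/
def IsBrick (S : C) : Prop := ¬ IsZero S ∧ ∀ f : S ⟶ S, f = 0 ∨ IsIso f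

/-- A simple object of the full abelian subcategory determined by a wide subcategory `W`. -/
def IsSimpleIn (W : Set C) (S : C) : Prop :=
  S ∈ W ∧ ¬ IsZero S ∧ ∀ ⦃A : C⦄ (f : A ⟶ S), A ∈ W → Mono f → IsZero A ∨ IsIso f

/-- A Hasse arrow `T → U` in the poset of torsion classes: `U ⊊ T` are adjacent. -/
def IsHasseArrow (T U : Set C) : Prop :=
  IsTorsionClass C T ∧ IsTorsionClass C U ∧ U ⊂ T ∧
    ∀ V : Set C, IsTorsionClass C V → U ⊆ V → V ⊆ T → V = U ∨ V = T

/-- A Hasse arrow `F → G` in the poset of torsion-free classes: `G ⊊ F` are adjacent. -/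
def IsHasseArrowTorf (F G : Set C) : Prop :=
  IsTorsionFreeClass C F ∧ IsTorsionFreeClass C G ∧ G ⊂ F ∧
    ∀ H : Set C, IsTorsionFreeClass C H → G ⊆ H → H ⊆ F → H = G ∨ H = F

/-- The brick label of a Hasse arrow `T → U` of torsion classes:
the unique brick in `U^⊥ ∩ T`. -/
def IsBrickLabel (T U : Set C) (S : C) : Prop := IsBrick C S ∧ S ∈ RPerp C U ∩ T

/-- The brick label of a Hasse arrow `F → G` of torsion-free classes:
the unique brick in `^⊥G ∩ F`. -/
def IsBrickLabelTorf (F G : Set C) (S : C) : Prop := IsBrick C S ∧ S ∈ LPerp C G ∩ F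

/-- The left wide subcategory of a torsion class. -/
def WL (T : Set C) : Set C :=
  {X | X ∈ T ∧ ∀ ⦃Y : C⦄ (g : Y ⟶ X), Y ∈ T → kernel g ∈ T}

/-- The right wide subcategory of a torsion-free class. -/
def WR (F : Set C) : Set C :=
  {X | X ∈ F ∧ ∀ ⦃Y : C⦄ (f : X ⟶ Y), Y ∈ F → cokernel f ∈ F}

/-- A Serre subcategory of the abelian category given by a wide subcategory `W`:
closed under extensions, subobjects and quotients within `W`. -/
structure IsSerreIn (W S : Set C) : Prop where
  subset : S ⊆ W
  zero_mem : ∀ Z : C, IsZero Z → Z ∈ S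
  sub_mem : ∀ ⦃A X : C⦄ (f : A ⟶ X), Mono f → A ∈ W → X ∈ S → A ∈ S
  quot_mem : ∀ ⦃X B : C⦄ (f : X ⟶ B), Epi f → B ∈ W → X ∈ S → B ∈ S
  ext_mem : ∀ E : ShortComplex C, E.ShortExact → E.X₂ ∈ W →
    E.X₁ ∈ S → E.X₃ ∈ S → E.X₂ ∈ S

/-- A torsion class of the abelian category given by a wide subcategory `W`:
a subclass of `W` containing the zero objects and closed under quotients in `W`
and extensions. -/
structure IsTorsionClassIn (W X : Set C) : Prop where
  subset : X ⊆ W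
  zero_mem : ∀ Z : C, IsZero Z → Z ∈ X
  quot_mem : ∀ ⦃A B : C⦄ (f : A ⟶ B), Epi f → A ∈ X → B ∈ W → B ∈ X
  ext_mem : ∀ E : ShortComplex C, E.ShortExact → E.X₁ ∈ X → E.X₃ ∈ X → E.X₂ ∈ X

/-!
The objects `X ∈ T` all of whose morphisms `f : X ⟶ S` are zero or epic with `ker f ∈ T`
form a torsion class: for a quotient `A ↠ B` the kernel of `B ⟶ S` is a quotient of the
kernel of `A ⟶ S`, and for a short exact sequence `0 → X₁ → X₂ → X₃ → 0` either `f` factors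
through `X₃` or `X₁ → S` is already epic, and in both cases `ker f` is an extension of
objects already known to lie in `T`. This class contains `U` (as `S ∈ U^⊥`) and `S` (as `S`
is a brick), hence all of `T`. In particular a monomorphism into `S` from an object of `T` is
zero or an isomorphism.
-/

open CategoryTheory.Abelian CategoryTheory.Abelian.Pseudoelement

section KernelSequences

variable {C}

lemma pseudo_exists_of_apply_kernel_eq_zero {X Y : C} (f : X ⟶ Y) (b : Pseudoelement X)
    (hb : pseudoApply f b = 0) :
    ∃ a : Pseudoelement (kernel f), pseudoApply (kernel.ι f) a = b :=
  pseudo_exact_of_exact (ShortComplex.exact_of_f_is_kernel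
    (ShortComplex.mk (kernel.ι f) f (kernel.condition f)) (kernelIsKernel f)) b hb

lemma epi_kernel_map_of_epi {A B S : C} (g : A ⟶ B) [Epi g] (f : B ⟶ S) :
    Epi (kernel.map (g ≫ f) f g (𝟙 S) (by simp)) := by
  apply epi_of_pseudo_surjective
  intro b
  obtain ⟨a, ha⟩ := pseudo_surjective_of_epi g (pseudoApply (kernel.ι f) b)
  have ha0 : pseudoApply (g ≫ f) a = 0 := by
    rw [Pseudoelement.comp_apply, ha, ← Pseudoelement.comp_apply, kernel.condition,
      Pseudoelement.zero_apply]
  obtain ⟨x, rfl⟩ := pseudo_exists_of_apply_kernel_eq_zero (g ≫ f) a ha0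
  refine ⟨x, pseudo_injective_of_mono (kernel.ι f) ?_⟩
  rw [← Pseudoelement.comp_apply, kernel.lift_ι, Pseudoelement.comp_apply, ha]

lemma shortExact_kernel_of_comp_eq {E : ShortComplex C} (hE : E.ShortExact) {S : C}
    {f : E.X₂ ⟶ S} {f₃ : E.X₃ ⟶ S} (hf : E.g ≫ f₃ = f) :
    (ShortComplex.mk (kernel.lift f E.f (by simp [← hf]))
      (kernel.map f f₃ E.g (𝟙 S) (by simp [← hf])) (by ext; simp)).ShortExact := by
  have := hE.mono_f
  have := hE.epi_g
  refine .mk' ?_ inferInstance ?_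
  · apply exact_of_pseudo_exact
    intro x hx
    dsimp only at x hx ⊢
    have hgx : pseudoApply E.g (pseudoApply (kernel.ι f) x) = 0 := by
      rw [← Pseudoelement.comp_apply, ← kernel.lift_ι f₃ (kernel.ι f ≫ E.g),
        Pseudoelement.comp_apply]
      exact (congrArg _ hx).trans (apply_zero _)
    obtain ⟨y, hy⟩ := pseudo_exact_of_exact hE.exact _ hgx
    refine ⟨y, pseudo_injective_of_mono (kernel.ι f) ?_⟩
    rwa [← Pseudoelement.comp_apply, kernel.lift_ι]
  · apply epi_of_pseudo_surjective
    intro z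
    dsimp only at z ⊢
    obtain ⟨w, hw⟩ := pseudo_surjective_of_epi E.g (pseudoApply (kernel.ι f₃) z)
    have hfw : pseudoApply f w = 0 := by
      rw [← hf, Pseudoelement.comp_apply, hw, ← Pseudoelement.comp_apply, kernel.condition,
        Pseudoelement.zero_apply]
    obtain ⟨x, rfl⟩ := pseudo_exists_of_apply_kernel_eq_zero f w hfw
    refine ⟨x, pseudo_injective_of_mono (kernel.ι f₃) ?_⟩
    rwa [← Pseudoelement.comp_apply, kernel.lift_ι, Pseudoelement.comp_apply]

lemma shortExact_kernel_of_epi_comp {E : ShortComplex C} (hE : E.ShortExact) {S : C}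
    (f : E.X₂ ⟶ S) [Epi (E.f ≫ f)] :
    (ShortComplex.mk (kernel.map (E.f ≫ f) f E.f (𝟙 S) (by simp)) (kernel.ι f ≫ E.g)
      (by simp)).ShortExact := by
  have := hE.mono_f
  have := hE.epi_g
  refine .mk' ?_ inferInstance ?_
  · apply exact_of_pseudo_exact
    intro x hx
    dsimp only at x hx ⊢
    obtain ⟨y, hy⟩ := pseudo_exact_of_exact hE.exact _ (by rwa [← Pseudoelement.comp_apply])
    have hy0 : pseudoApply (E.f ≫ f) y = 0 := by
      rw [Pseudoelement.comp_apply, hy, ← Pseudoelement.comp_apply, kernel.condition,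
        Pseudoelement.zero_apply]
    obtain ⟨y', rfl⟩ := pseudo_exists_of_apply_kernel_eq_zero (E.f ≫ f) y hy0
    refine ⟨y', pseudo_injective_of_mono (kernel.ι f) ?_⟩
    rw [← Pseudoelement.comp_apply, kernel.lift_ι, Pseudoelement.comp_apply, hy]
  · apply epi_of_pseudo_surjective
    intro z
    obtain ⟨w, rfl⟩ := pseudo_surjective_of_epi E.g z
    -- `E.f ≫ f` is epic, so `w` can be corrected by an element of the image of `E.f`
    -- to land in `kernel f` without changing its image in `E.X₃`
    obtain ⟨y, hy⟩ := pseudo_surjective_of_epi (E.f ≫ f) (pseudoApply f w)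
    rw [Pseudoelement.comp_apply] at hy
    obtain ⟨c, hc0, hcg⟩ := sub_of_eq_image f w (pseudoApply E.f y) hy.symm
    obtain ⟨x, rfl⟩ := pseudo_exists_of_apply_kernel_eq_zero f c hc0
    refine ⟨x, ?_⟩
    have hgy : pseudoApply E.g (pseudoApply E.f y) = 0 := by
      rw [← Pseudoelement.comp_apply, E.zero, Pseudoelement.zero_apply]
    rw [Pseudoelement.comp_apply, hcg E.X₃ E.g hgy]

end KernelSequences

section TorsionClasses

variable {C}

lemma isTorsionClass_torsClosure (X : Set C) : IsTorsionClass C (torsClosure C X) where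
  zero_mem Z hZ := Set.mem_sInter.2 fun _ hT => hT.1.zero_mem Z hZ
  quot_mem _ _ f hf hA := Set.mem_sInter.2 fun T hT => hT.1.quot_mem f hf (hA T hT)
  ext_mem E hE h₁ h₃ := Set.mem_sInter.2 fun T hT => hT.1.ext_mem E hE (h₁ T hT) (h₃ T hT)

lemma subset_torsClosure (X : Set C) : X ⊆ torsClosure C X :=
  fun _ hx => Set.mem_sInter.2 fun _ hT => hT.2 hx

lemma torsClosure_subset {X T : Set C} (hT : IsTorsionClass C T) (hX : X ⊆ T) :
    torsClosure C X ⊆ T :=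
  fun _ hx => Set.mem_sInter.1 hx T ⟨hT, hX⟩

lemma IsTorsionClass.kernel_mem_of_eq_zero {T : Set C} (hT : IsTorsionClass C T) {X Y : C}
    {f : X ⟶ Y} (hf : f = 0) (hX : X ∈ T) : kernel f ∈ T :=
  hT.quot_mem ((kernelIsoOfEq hf).trans kernelZeroIsoSource).inv inferInstance hX

def zeroOrEpiKernelClass (T : Set C) (S : C) : Set C :=
  {X | X ∈ T ∧ ∀ f : X ⟶ S, (f = 0 ∨ Epi f) ∧ kernel f ∈ T}

variable {T : Set C} {S : C}

lemma mem_zeroOrEpiKernelClass_of_forall_eq_zero (hT : IsTorsionClass C T) {X : C}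
    (hX : X ∈ T) (h : ∀ f : X ⟶ S, f = 0) : X ∈ zeroOrEpiKernelClass T S :=
  ⟨hX, fun f => ⟨.inl (h f), hT.kernel_mem_of_eq_zero (h f) hX⟩⟩

lemma mem_zeroOrEpiKernelClass_of_isBrick (hT : IsTorsionClass C T) (hS : IsBrick C S)
    (hST : S ∈ T) : S ∈ zeroOrEpiKernelClass T S := by
  refine ⟨hST, fun f => ?_⟩
  rcases hS.2 f with hf | _
  · exact ⟨.inl hf, hT.kernel_mem_of_eq_zero hf hST⟩
  · exact ⟨.inr inferInstance, hT.zero_mem _ (isZero_kernel_of_mono f)⟩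

lemma zeroOrEpiKernelClass_quot_mem (hT : IsTorsionClass C T) {A B : C} (g : A ⟶ B)
    [Epi g] (hA : A ∈ zeroOrEpiKernelClass T S) : B ∈ zeroOrEpiKernelClass T S := by
  have hB : B ∈ T := hT.quot_mem g inferInstance hA.1
  refine ⟨hB, fun f => ?_⟩
  obtain ⟨h0 | hepi, hker⟩ := hA.2 (g ≫ f)
  · have hf : f = 0 := zero_of_epi_comp g h0
    exact ⟨.inl hf, hT.kernel_mem_of_eq_zero hf hB⟩
  · have : Epi f := epi_of_epi g f
    exact ⟨.inr this, hT.quot_mem _ (epi_kernel_map_of_epi g f) hker⟩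

lemma zeroOrEpiKernelClass_ext_mem (hT : IsTorsionClass C T) {E : ShortComplex C}
    (hE : E.ShortExact) (h₁ : E.X₁ ∈ zeroOrEpiKernelClass T S)
    (h₃ : E.X₃ ∈ zeroOrEpiKernelClass T S) : E.X₂ ∈ zeroOrEpiKernelClass T S := by
  have := hE.epi_g
  have hX₂ : E.X₂ ∈ T := hT.ext_mem E hE h₁.1 h₃.1
  refine ⟨hX₂, fun f => ?_⟩
  by_cases hc : E.f ≫ f = 0
  · have hf : E.g ≫ hE.exact.desc f hc = f := hE.exact.g_desc f hc
    obtain ⟨h0 | hepi, hker⟩ := h₃.2 (hE.exact.desc f hc)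
    · have hf0 : f = 0 := by rw [← hf, h0, comp_zero]
      exact ⟨.inl hf0, hT.kernel_mem_of_eq_zero hf0 hX₂⟩
    · exact ⟨.inr (hf ▸ epi_comp _ _),
        hT.ext_mem _ (shortExact_kernel_of_comp_eq hE hf) h₁.1 hker⟩
  · obtain ⟨h0 | hepi, hker⟩ := h₁.2 (E.f ≫ f)
    · exact absurd h0 hc
    · exact ⟨.inr (epi_of_epi E.f f),
        hT.ext_mem _ (shortExact_kernel_of_epi_comp hE f) hker h₃.1⟩

lemma isTorsionClass_zeroOrEpiKernelClass (hT : IsTorsionClass C T) (S : C) :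
    IsTorsionClass C (zeroOrEpiKernelClass T S) where
  zero_mem Z hZ := mem_zeroOrEpiKernelClass_of_forall_eq_zero hT (hT.zero_mem Z hZ)
    fun f => hZ.eq_of_src f 0
  quot_mem _ _ g _ hA := zeroOrEpiKernelClass_quot_mem hT g hA
  ext_mem _ hE h₁ h₃ := zeroOrEpiKernelClass_ext_mem hT hE h₁ h₃

lemma isSimpleIn_WL_of_forall (hST : S ∈ T) (hS : ¬IsZero S)
    (h : ∀ X ∈ T, ∀ f : X ⟶ S, (f = 0 ∨ Epi f) ∧ kernel f ∈ T) :
    IsSimpleIn C (WL C T) S := by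
  refine ⟨⟨hST, fun Y g hY => (h Y hY g).2⟩, hS, fun A f hA _ => ?_⟩
  rcases (h A hA.1 f).1 with hf | _
  · exact .inl (IsZero.of_mono_eq_zero f hf)
  · exact .inr (isIso_of_mono_of_epi f)

end TorsionClasses

theorem stmt_16
    (U : Set C) (S : C) (hS : IsBrick C S)
    (hperp : S ∈ RPerp C U) (T : Set C) (hT : T = torsClosure C (U ∪ {S})) :
    (∀ X ∈ T, ∀ f : X ⟶ S, (f = 0 ∨ Epi f) ∧ kernel f ∈ T) ∧
    IsSimpleIn C (WL C T) S := by
  have hTtors : IsTorsionClass C T := hT ▸ isTorsionClass_torsClosure _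
  have hUS : U ∪ {S} ⊆ T := hT ▸ subset_torsClosure _
  have hST : S ∈ T := hUS (.inr rfl)
  have hgen : U ∪ {S} ⊆ zeroOrEpiKernelClass T S := by
    rintro X (hX | rfl)
    · exact mem_zeroOrEpiKernelClass_of_forall_eq_zero hTtors (hUS (.inl hX)) (hperp X hX)
    · exact mem_zeroOrEpiKernelClass_of_isBrick hTtors hS hST
  have key : ∀ X ∈ T, ∀ f : X ⟶ S, (f = 0 ∨ Epi f) ∧ kernel f ∈ T := fun X hX =>
    (torsClosure_subset (isTorsionClass_zeroOrEpiKernelClass hTtors S) hgen (hT ▸ hX)).2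
  exact ⟨key, isSimpleIn_WL_of_forall hST hS.1 key⟩
end

section
/- Let 𝒜 be an abelian length category, 𝒰 ⊆ 𝒯 torsion classes, and 𝒲 := 𝒰^⊥ ∩ 𝒯. The following are equivalent: (a) 𝒲 is a wide subcategory of 𝒜; (b) 𝒲 is a Serre subcategory of W_L(𝒯); (c) 𝒲 is a Serre subcategory of W_R(𝒰^⊥); (d) 𝒲 = W_R(𝒰^⊥) ∩ W_L(𝒯). -/
open CategoryTheory CategoryTheory.Limits

universe v u

attribute [local instance] CategoryTheory.Abelian.hasFiniteBiproducts

variable (C : Type u) [Category.{v} C] [Abelian C]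

/-!
Everything rests on two facts. First, `W_L(T)` and `W_R(F)` are wide for every torsion class `T`
and torsion-free class `F`, and so is any Serre subcategory of a wide subcategory and any
intersection of wide subcategories; this gives (b) ⇒ (a), (c) ⇒ (a) and (d) ⇒ (a).
Second, in a noetherian category every object `Y` has a largest subobject `tY` in a torsion
class `T`, and `Y / tY ∈ T^⊥`. If `W = U^⊥ ∩ T` is wide and `g : Y ⟶ X` with `Y ∈ T`, `X ∈ W`,
then `g` kills the `U`-torsion part of `Y` and factors through `Y / tY ∈ W`, so its kernel is an
extension of a kernel in `W` by a quotient of `tY ∈ T`; hence `W ⊆ W_L(T)`. Dually `W ⊆ W_R(U^⊥)`,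
and (a) ⇒ (b), (c), (d) follow.
-/

section

variable {C}

section KernelCokernelComp

variable {X Y Z : C}

noncomputable def kernelCompShortComplex (f : X ⟶ Y) (g : Y ⟶ Z) : ShortComplex C :=
  ShortComplex.mk (kernel.map f (f ≫ g) (𝟙 _) g (by simp))
    (kernel.map (f ≫ g) g f (𝟙 _) (by simp)) (by ext; simp)

lemma kernelCompShortComplex_exact (f : X ⟶ Y) (g : Y ⟶ Z) :
    (kernelCompShortComplex f g).Exact :=
  (kernelCokernelCompSequence_exact f g).exact 0

instance (f : X ⟶ Y) (g : Y ⟶ Z) : Mono (kernelCompShortComplex f g).f :=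
  inferInstanceAs (Mono ((kernelCokernelCompSequence f g).map' 0 1))

lemma kernelCompShortComplex_shortExact (f : X ⟶ Y) (g : Y ⟶ Z) [Epi f] :
    (kernelCompShortComplex f g).ShortExact where
  exact := kernelCompShortComplex_exact f g
  epi_g := ((kernelCokernelCompSequence_exact f g).exact 1).epi_f
    ((isZero_cokernel_of_epi f).eq_of_tgt _ _)

noncomputable def cokernelCompShortComplex (f : X ⟶ Y) (g : Y ⟶ Z) : ShortComplex C :=
  ShortComplex.mk (cokernel.map f (f ≫ g) (𝟙 _) g (by simp))
    (cokernel.map (f ≫ g) g f (𝟙 _) (by simp)) (by ext; simp)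

lemma cokernelCompShortComplex_exact (f : X ⟶ Y) (g : Y ⟶ Z) :
    (cokernelCompShortComplex f g).Exact :=
  (kernelCokernelCompSequence_exact f g).exact 3

instance (f : X ⟶ Y) (g : Y ⟶ Z) : Epi (cokernelCompShortComplex f g).g :=
  inferInstanceAs (Epi ((kernelCokernelCompSequence f g).map' 4 5))

lemma cokernelCompShortComplex_shortExact (f : X ⟶ Y) (g : Y ⟶ Z) [Mono g] :
    (cokernelCompShortComplex f g).ShortExact where
  exact := cokernelCompShortComplex_exact f g
  mono_f := ((kernelCokernelCompSequence_exact f g).exact 2).mono_g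
    ((isZero_kernel_of_mono g).eq_of_src _ _)

end KernelCokernelComp

section ClosureProperties

variable {T F : Set C}

lemma IsTorsionClass.mem_of_iso (hT : IsTorsionClass C T) {X Y : C} (e : X ≅ Y) (hX : X ∈ T) :
    Y ∈ T :=
  hT.quot_mem e.hom inferInstance hX

lemma IsTorsionClass.image_mem (hT : IsTorsionClass C T) {X Y : C} (f : X ⟶ Y) (hX : X ∈ T) :
    Abelian.image f ∈ T :=
  hT.quot_mem (Abelian.factorThruImage f) inferInstance hX

lemma IsTorsionClass.mem_of_epi (hT : IsTorsionClass C T) {X Y : C} (p : X ⟶ Y) [Epi p]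
    (hK : kernel p ∈ T) (hY : Y ∈ T) : X ∈ T :=
  hT.ext_mem _ { exact := ShortComplex.exact_kernel p } hK hY

lemma IsTorsionClass.kernel_comp_mem (hT : IsTorsionClass C T) {X Y Z : C} (p : X ⟶ Y) [Epi p]
    (g : Y ⟶ Z) (hp : kernel p ∈ T) (hg : kernel g ∈ T) : kernel (p ≫ g) ∈ T :=
  hT.ext_mem _ (kernelCompShortComplex_shortExact p g) hp hg

lemma IsTorsionFreeClass.mem_of_iso (hF : IsTorsionFreeClass C F) {X Y : C} (e : X ≅ Y)
    (hX : X ∈ F) : Y ∈ F :=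
  hF.sub_mem e.inv inferInstance hX

lemma IsTorsionFreeClass.coimage_mem (hF : IsTorsionFreeClass C F) {X Y : C} (f : X ⟶ Y)
    (hY : Y ∈ F) : Abelian.coimage f ∈ F :=
  hF.sub_mem (Abelian.factorThruCoimage f) inferInstance hY

lemma IsTorsionFreeClass.mem_of_mono (hF : IsTorsionFreeClass C F) {X Y : C} (i : X ⟶ Y) [Mono i]
    (hX : X ∈ F) (hC : cokernel i ∈ F) : Y ∈ F :=
  hF.ext_mem _ { exact := ShortComplex.exact_cokernel i } hX hC

lemma IsTorsionFreeClass.cokernel_comp_mem (hF : IsTorsionFreeClass C F) {X Y Z : C} (f : X ⟶ Y)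
    (i : Y ⟶ Z) [Mono i] (hf : cokernel f ∈ F) (hi : cokernel i ∈ F) : cokernel (f ≫ i) ∈ F :=
  hF.ext_mem _ (cokernelCompShortComplex_shortExact f i) hf hi

lemma isTorsionFreeClass_rPerp (U : Set C) : IsTorsionFreeClass C (RPerp C U) where
  zero_mem _ hZ _ _ f := hZ.eq_of_tgt f 0
  sub_mem _ _ i _ hB A hA f := zero_of_comp_mono i (hB A hA (f ≫ i))
  ext_mem E hE h₁ h₃ A hA f := by
    obtain ⟨l, hl⟩ := KernelFork.IsLimit.lift' hE.fIsKernel f (h₃ A hA (f ≫ E.g))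
    rw [← hl, h₁ A hA l, zero_comp]

lemma rPerp_anti {U T : Set C} (hUT : U ⊆ T) : RPerp C T ⊆ RPerp C U :=
  fun _ hY A hA f => hY A (hUT hA) f

end ClosureProperties

lemma IsTorsionClass.exists_mono_cokernel_mem_rPerp [Noetherian C] {T : Set C}
    (hT : IsTorsionClass C T) (Y : C) :
    ∃ (Y' : C) (i : Y' ⟶ Y), Mono i ∧ Y' ∈ T ∧ cokernel i ∈ RPerp C T := by
  obtain ⟨A, hA, hmax⟩ := wellFounded_gt.has_min {A : Subobject Y | (A : C) ∈ T}
    ⟨⊥, hT.zero_mem _ ((isZero_zero C).of_iso Subobject.botCoeIsoZero)⟩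
  refine ⟨A, A.arrow, inferInstance, hA, fun B hB h => ?_⟩
  -- `kernel q` is the preimage in `Y` of the image of `h`, an extension of two objects of `T`
  set q := cokernel.π A.arrow ≫ cokernel.π h
  have hq : kernel q ∈ T := hT.kernel_comp_mem _ _ (hT.image_mem _ hA) (hT.image_mem _ hB)
  have hle : A ≤ kernelSubobject q := le_kernelSubobject _ _ (by simp [q])
  have heq : A = kernelSubobject q :=
    hle.eq_of_not_lt (hmax _ (hT.mem_of_iso (kernelSubobjectIso q).symm hq))
  have hfac : A.Factors (kernel.ι q) :=
    Subobject.factors_of_le _ heq.ge (kernelSubobject_factors _ _ (kernel.condition q))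
  -- the epimorphism `kernel q ⟶ kernel (cokernel.π h)` vanishes, as `kernel q` lies in `A`
  have hι : kernel.ι (cokernel.π h) = 0 := by
    let φ := kernel.map q (cokernel.π h) (cokernel.π A.arrow) (𝟙 _) (Category.comp_id q)
    have : Epi φ := (kernelCompShortComplex_shortExact (cokernel.π A.arrow) (cokernel.π h)).epi_g
    rw [← cancel_epi φ, comp_zero, kernel.lift_ι, ← A.factorThru_arrow _ hfac, Category.assoc,
      cokernel.condition, comp_zero]
  rw [← Abelian.image.fac h]
  simp [Abelian.image.ι, hι]

section WideSubcategories

variable {T F : Set C}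

lemma mem_WL_of_iso (hT : IsTorsionClass C T) {X X' : C} (e : X ≅ X') (hX : X ∈ WL C T) :
    X' ∈ WL C T :=
  ⟨hT.mem_of_iso e hX.1, fun _ g hY =>
    hT.mem_of_iso (kernelCompMono g e.inv) (hX.2 (g ≫ e.inv) hY)⟩

lemma mem_WR_of_iso (hF : IsTorsionFreeClass C F) {X X' : C} (e : X ≅ X') (hX : X ∈ WR C F) :
    X' ∈ WR C F :=
  ⟨hF.mem_of_iso e hX.1, fun _ f hY =>
    hF.mem_of_iso (cokernelEpiComp e.hom f) (hX.2 (e.hom ≫ f) hY)⟩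

lemma isWide_WL (hT : IsTorsionClass C T) : IsWide C (WL C T) where
  zero_mem Z hZ := ⟨hT.zero_mem Z hZ, fun _ g hY => by
    obtain rfl : g = 0 := hZ.eq_of_tgt g 0
    exact hT.mem_of_iso kernelZeroIsoSource.symm hY⟩
  ker_mem X Y f hX hY := ⟨hY.2 f hX.1, fun _ g hY' =>
    hT.mem_of_iso (kernelCompMono g (kernel.ι f)) (hX.2 (g ≫ kernel.ι f) hY')⟩
  coker_mem X Y f hX hY := by
    refine ⟨hT.quot_mem (cokernel.π f) inferInstance hY.1, fun Z g hZ => ?_⟩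
    have sq := IsPullback.of_hasPullback (cokernel.π f) g
    have := isIso_kernel_map_of_isPullback sq
    have := isIso_kernel_map_of_isPullback sq.flip
    have hP : pullback (cokernel.π f) g ∈ T :=
      hT.mem_of_epi (pullback.snd _ _) (hT.mem_of_iso (asIso (kernel.map _ _ _ _ sq.flip.w)).symm
        (hT.image_mem f hX.1)) hZ
    exact hT.mem_of_iso (asIso (kernel.map _ _ _ _ sq.w)) (hY.2 (pullback.fst _ _) hP)
  ext_mem E hE h₁ h₃ := by
    refine ⟨hT.ext_mem E hE h₁.1 h₃.1, fun Y g hY => ?_⟩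
    have hK : kernel E.g ∈ WL C T :=
      mem_WL_of_iso hT (hE.fIsKernel.conePointUniqueUpToIso (limit.isLimit _)) h₁
    -- `kernel g` is the kernel of the induced map `kernel (g ≫ E.g) ⟶ kernel E.g`
    exact hT.mem_of_iso
      ((kernelCompShortComplex_exact g E.g).fIsKernel.conePointUniqueUpToIso
        (limit.isLimit _)).symm (hK.2 _ (h₃.2 (g ≫ E.g) hY))

lemma isWide_WR (hF : IsTorsionFreeClass C F) : IsWide C (WR C F) where
  zero_mem Z hZ := ⟨hF.zero_mem Z hZ, fun _ f hY => by
    obtain rfl : f = 0 := hZ.eq_of_src f 0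
    exact hF.mem_of_iso cokernelZeroIsoTarget.symm hY⟩
  ker_mem X Y f hX hY := by
    refine ⟨hF.sub_mem (kernel.ι f) inferInstance hX.1, fun Z g hZ => ?_⟩
    have sq := IsPushout.of_hasPushout (kernel.ι f) g
    have := isIso_cokernel_map_of_isPushout sq
    have := isIso_cokernel_map_of_isPushout sq.flip
    have hP : pushout (kernel.ι f) g ∈ F :=
      hF.mem_of_mono (pushout.inr _ _) hZ (hF.mem_of_iso (asIso (cokernel.map _ _ _ _ sq.w))
        (hF.coimage_mem f hY.1))
    exact hF.mem_of_iso (asIso (cokernel.map _ _ _ _ sq.flip.w)).symm (hX.2 (pushout.inl _ _) hP)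
  coker_mem X Y f hX hY := ⟨hX.2 f hY.1, fun _ g hZ =>
    hF.mem_of_iso (cokernelEpiComp (cokernel.π f) g) (hY.2 (cokernel.π f ≫ g) hZ)⟩
  ext_mem E hE h₁ h₃ := by
    refine ⟨hF.ext_mem E hE h₁.1 h₃.1, fun Y f hY => ?_⟩
    have hQ : cokernel E.f ∈ WR C F :=
      mem_WR_of_iso hF (hE.gIsCokernel.coconePointUniqueUpToIso (colimit.isColimit _)) h₃
    exact hF.mem_of_iso
      ((cokernelCompShortComplex_exact E.f f).gIsCokernel.coconePointUniqueUpToIso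
        (colimit.isColimit _)).symm (hQ.2 _ (h₁.2 (E.f ≫ f) hY))

lemma IsSerreIn.isWide {V W : Set C} (hV : IsWide C V) (hS : IsSerreIn C V W) : IsWide C W where
  zero_mem := hS.zero_mem
  ker_mem _ _ f hX hY := hS.sub_mem (kernel.ι f) inferInstance
    (hV.ker_mem f (hS.subset hX) (hS.subset hY)) hX
  coker_mem _ _ f hX hY := hS.quot_mem (cokernel.π f) inferInstance
    (hV.coker_mem f (hS.subset hX) (hS.subset hY)) hY
  ext_mem E hE h₁ h₃ := hS.ext_mem E hE (hV.ext_mem E hE (hS.subset h₁) (hS.subset h₃)) h₁ h₃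

lemma IsWide.inter {V₁ V₂ : Set C} (h₁ : IsWide C V₁) (h₂ : IsWide C V₂) :
    IsWide C (V₁ ∩ V₂) where
  zero_mem Z hZ := ⟨h₁.zero_mem Z hZ, h₂.zero_mem Z hZ⟩
  ker_mem _ _ f hX hY := ⟨h₁.ker_mem f hX.1 hY.1, h₂.ker_mem f hX.2 hY.2⟩
  coker_mem _ _ f hX hY := ⟨h₁.coker_mem f hX.1 hY.1, h₂.coker_mem f hX.2 hY.2⟩
  ext_mem E hE hX₁ hX₃ := ⟨h₁.ext_mem E hE hX₁.1 hX₃.1, h₂.ext_mem E hE hX₁.2 hX₃.2⟩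

end WideSubcategories

section TorsionInterval

variable [Noetherian C] {U T : Set C}

lemma rPerp_inter_subset_WL (hU : IsTorsionClass C U) (hT : IsTorsionClass C T) (hUT : U ⊆ T)
    (hW : IsWide C (RPerp C U ∩ T)) : RPerp C U ∩ T ⊆ WL C T := by
  refine fun X hX => ⟨hX.2, fun Y g hY => ?_⟩
  obtain ⟨Y', i, -, hY'U, hQ⟩ := hU.exists_mono_cokernel_mem_rPerp Y
  let g' := cokernel.desc i g (hX.1 Y' hY'U (i ≫ g))
  have hQW : cokernel i ∈ RPerp C U ∩ T := ⟨hQ, hT.quot_mem (cokernel.π i) inferInstance hY⟩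
  rw [← cokernel.π_desc i g (hX.1 Y' hY'U (i ≫ g))]
  exact hT.kernel_comp_mem _ g' (hT.image_mem i (hUT hY'U)) (hW.ker_mem g' hQW hX).2

lemma rPerp_inter_subset_WR (hT : IsTorsionClass C T) (hUT : U ⊆ T)
    (hW : IsWide C (RPerp C U ∩ T)) : RPerp C U ∩ T ⊆ WR C (RPerp C U) := by
  refine fun X hX => ⟨hX.1, fun Y f hY => ?_⟩
  obtain ⟨Y', i, -, hY'T, hQ⟩ := hT.exists_mono_cokernel_mem_rPerp Y
  let f' := kernel.lift (cokernel.π i) f (hQ X hX.2 (f ≫ cokernel.π i))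
  have hKW : Abelian.image i ∈ RPerp C U ∩ T :=
    ⟨(isTorsionFreeClass_rPerp U).sub_mem (kernel.ι _) inferInstance hY, hT.image_mem i hY'T⟩
  rw [← kernel.lift_ι (cokernel.π i) f (hQ X hX.2 (f ≫ cokernel.π i))]
  exact (isTorsionFreeClass_rPerp U).cokernel_comp_mem f' _ (hW.coker_mem f' hX hKW).1
    (rPerp_anti hUT ((isTorsionFreeClass_rPerp T).coimage_mem _ hQ))

lemma isSerreIn_WL (hU : IsTorsionClass C U) (hT : IsTorsionClass C T) (hUT : U ⊆ T)
    (hW : IsWide C (RPerp C U ∩ T)) : IsSerreIn C (WL C T) (RPerp C U ∩ T) where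
  subset := rPerp_inter_subset_WL hU hT hUT hW
  zero_mem Z hZ := hW.zero_mem Z hZ
  sub_mem _ _ f _ hA hX := ⟨(isTorsionFreeClass_rPerp U).sub_mem f inferInstance hX.1, hA.1⟩
  quot_mem X B f _ hB hX := by
    have hK : kernel f ∈ RPerp C U ∩ T :=
      ⟨(isTorsionFreeClass_rPerp U).sub_mem (kernel.ι f) inferInstance hX.1, hB.2 f hX.2⟩
    exact ⟨(isTorsionFreeClass_rPerp U).mem_of_iso (asIso (Abelian.factorThruCoimage f))
      (hW.coker_mem (kernel.ι f) hK hX).1, hB.1⟩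
  ext_mem E hE _ h₁ h₃ := hW.ext_mem E hE h₁ h₃

lemma isSerreIn_WR (hT : IsTorsionClass C T) (hUT : U ⊆ T) (hW : IsWide C (RPerp C U ∩ T)) :
    IsSerreIn C (WR C (RPerp C U)) (RPerp C U ∩ T) where
  subset := rPerp_inter_subset_WR hT hUT hW
  zero_mem Z hZ := hW.zero_mem Z hZ
  sub_mem A X f _ hA hX := by
    have hC : cokernel f ∈ RPerp C U ∩ T :=
      ⟨hA.2 f hX.1, hT.quot_mem (cokernel.π f) inferInstance hX.2⟩
    exact ⟨hA.1, hT.mem_of_iso (asIso (Abelian.factorThruImage f)).symm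
      (hW.ker_mem (cokernel.π f) hX hC).2⟩
  quot_mem _ _ f _ hB hX := ⟨hB.1, hT.quot_mem f inferInstance hX.2⟩
  ext_mem E hE _ h₁ h₃ := hW.ext_mem E hE h₁ h₃

end TorsionInterval

end

theorem stmt_18 [Noetherian C]
    (U T : Set C) (hU : IsTorsionClass C U) (hT : IsTorsionClass C T) (hUT : U ⊆ T)
    (W : Set C) (hW : W = RPerp C U ∩ T) :
    List.TFAE
      [IsWide C W,
       IsSerreIn C (WL C T) W,
       IsSerreIn C (WR C (RPerp C U)) W,
       W = WR C (RPerp C U) ∩ WL C T] := by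
  subst hW
  tfae_have 1 → 2 := isSerreIn_WL hU hT hUT
  tfae_have 2 → 1 := (·.isWide (isWide_WL hT))
  tfae_have 1 → 3 := isSerreIn_WR hT hUT
  tfae_have 3 → 1 := (·.isWide (isWide_WR (isTorsionFreeClass_rPerp U)))
  tfae_have 1 → 4 := fun h => Set.Subset.antisymm
    (fun X hX => ⟨rPerp_inter_subset_WR hT hUT h hX, rPerp_inter_subset_WL hU hT hUT h hX⟩)
    (fun X hX => ⟨hX.1.1, hX.2.1⟩)
  tfae_have 4 → 1 := fun h => h ▸ (isWide_WR (isTorsionFreeClass_rPerp U)).inter (isWide_WL hT)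
  tfae_finish
end
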